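/- arXiv:1210.0577 — 4 statements merged into one kernel-verified Lean document; each statement's English description precedes it below -/
import Mathlib

section
/- Let H be a complex inner product space and let T : H → H be a linear projection (T∘T = T) that is neither 0 nor the identity, and assume T is bounded. Then the operator norms satisfy ‖I − T‖ = ‖T‖. -/
/-!
Write `x = u + v` with `u = P x` and `v = x - P x`. The vector `x' = (‖v‖/‖u‖) u + (‖u‖/‖v‖) v`
has the same norm as `x`: the rescaling swaps `‖u‖²` and `‖v‖²` and leaves the cross term
`2 re ⟪u, v⟫` unchanged. Since `(1 - P) x' = (‖u‖/‖v‖) v` has norm `‖u‖`, this gives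
`‖P x‖ ≤ ‖1 - P‖ ‖x‖`, and exchanging the roles of `P` and `1 - P` gives the reverse inequality.
When `v = 0` one uses instead that a nonzero idempotent has norm at least `1`.
-/

open scoped InnerProductSpace

theorem IsIdempotentElem.one_le_norm {R : Type*} [NonUnitalNormedRing R] {p : R}
    (hp : IsIdempotentElem p) (h0 : p ≠ 0) : 1 ≤ ‖p‖ := by
  have : ‖p‖ * 1 ≤ ‖p‖ * ‖p‖ := by simpa [hp.eq] using norm_mul_le p p
  exact le_of_mul_le_mul_left this (norm_pos_iff.2 h0)

section

variable {𝕜 E : Type*} [RCLike 𝕜] [NormedAddCommGroup E] [InnerProductSpace 𝕜 E]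

theorem norm_smul_add_smul_swap_norms {u v : E} (hu : u ≠ 0) (hv : v ≠ 0) :
    ‖((‖v‖ / ‖u‖ : ℝ) : 𝕜) • u + ((‖u‖ / ‖v‖ : ℝ) : 𝕜) • v‖ = ‖u + v‖ := by
  have hu' : ‖u‖ ≠ 0 := norm_ne_zero_iff.2 hu
  have hv' : ‖v‖ ≠ 0 := norm_ne_zero_iff.2 hv
  have hre : RCLike.re ⟪((‖v‖ / ‖u‖ : ℝ) : 𝕜) • u, ((‖u‖ / ‖v‖ : ℝ) : 𝕜) • v⟫_𝕜
      = RCLike.re ⟪u, v⟫_𝕜 := by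
    rw [inner_smul_left, inner_smul_right, RCLike.conj_ofReal, ← mul_assoc, ← RCLike.ofReal_mul,
      div_mul_div_comm, mul_comm ‖v‖, div_self (mul_ne_zero hu' hv'), RCLike.ofReal_one, one_mul]
  rw [← sq_eq_sq₀ (norm_nonneg _) (norm_nonneg _), norm_add_sq (𝕜 := 𝕜), norm_add_sq (𝕜 := 𝕜),
    hre, norm_smul, norm_smul, RCLike.norm_ofReal, RCLike.norm_ofReal,
    abs_of_nonneg (by positivity), abs_of_nonneg (by positivity), div_mul_cancel₀ _ hu',
    div_mul_cancel₀ _ hv']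
  ring

theorem IsIdempotentElem.norm_le_norm_one_sub {P : E →L[𝕜] E} (hP : IsIdempotentElem P)
    (h1 : P ≠ 1) : ‖P‖ ≤ ‖1 - P‖ := by
  have hQ : 1 ≤ ‖1 - P‖ := hP.one_sub.one_le_norm (sub_ne_zero.2 h1.symm)
  refine P.opNorm_le_bound (norm_nonneg _) fun x => ?_
  set u := P x
  set v := (1 - P) x
  have hPu : P u = u := congr($(hP.eq) x)
  have hPv : P v = 0 := by simp [v, u, hPu]
  have hx : u + v = x := add_sub_cancel u x
  rcases eq_or_ne u 0 with hu | hu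
  · rw [hu, norm_zero]
    positivity
  rcases eq_or_ne v 0 with hv | hv
  · rw [← hx, hv, add_zero]
    exact le_mul_of_one_le_left (norm_nonneg _) hQ
  calc ‖u‖ = ‖(1 - P) (((‖v‖ / ‖u‖ : ℝ) : 𝕜) • u + ((‖u‖ / ‖v‖ : ℝ) : 𝕜) • v)‖ := by
        simp [hPu, hPv, norm_smul, hv]
    _ ≤ ‖1 - P‖ * ‖((‖v‖ / ‖u‖ : ℝ) : 𝕜) • u + ((‖u‖ / ‖v‖ : ℝ) : 𝕜) • v‖ := (1 - P).le_opNorm _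
    _ = ‖1 - P‖ * ‖x‖ := by rw [norm_smul_add_smul_swap_norms hu hv, hx]

end

theorem stmt_2_general {H : Type*} [NormedAddCommGroup H] [InnerProductSpace ℂ H]
    (T : H →L[ℂ] H)
    (hidem : T.comp T = T) (h0 : T ≠ 0)
    (h1 : T ≠ ContinuousLinearMap.id ℂ H) :
    ‖ContinuousLinearMap.id ℂ H - T‖ = ‖T‖ := by
  have hT : IsIdempotentElem T := hidem
  rw [← ContinuousLinearMap.one_def] at h1 ⊢
  refine le_antisymm ?_ (hT.norm_le_norm_one_sub h1)
  simpa using hT.one_sub.norm_le_norm_one_sub (by simpa [sub_eq_self] using h0)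

/-- Xu–Zikatanov identity: for a nontrivial bounded idempotent `T` on a Hilbert
space, `‖I − T‖ = ‖T‖`. -/
theorem stmt_2 {H : Type*} [NormedAddCommGroup H] [InnerProductSpace ℂ H]
    [CompleteSpace H] (T : H →L[ℂ] H)
    (hidem : T.comp T = T) (h0 : T ≠ 0)
    (h1 : T ≠ ContinuousLinearMap.id ℂ H) :
    ‖ContinuousLinearMap.id ℂ H - T‖ = ‖T‖ :=
  stmt_2_general T hidem h0 h1
end

section
/- Let V ∈ ℂ^{M×n} with linearly independent columns, P ∈ ℝ^{M×n} a selection matrix with P^T V invertible, I_n = V (P^T V)^{-1} P^T, and let P_V denote the orthogonal projection onto the column span of V (with respect to the Euclidean inner product on ℂ^M). Then for every h ∈ ℂ^M, ‖h − I_n h‖₂ ≤ ‖I_n‖₂ · ‖h − P_V h‖₂, where ‖·‖₂ on operators is the spectral norm. -/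
/-!
`I_n` maps into `S = range V` and fixes `S`. With `w = h - P_V h ∈ Sᗮ` this gives
`h - I_n h = w - I_n w` and `I_n w ∈ S ⊥ w`, so `‖h - I_n h‖² = ‖w‖² + ‖I_n w‖²`. Testing the
operator norm of `I_n` on `‖I_n w‖² • w + ‖w‖² • I_n w`, whose image is `(‖I_n w‖² + ‖w‖²) • I_n w`,
yields `‖w‖² + ‖I_n w‖² ≤ ‖I_n‖² ‖w‖²`.
-/

open Matrix

section ObliqueProjection

variable {𝕜 E : Type*} [RCLike 𝕜] [NormedAddCommGroup E] [InnerProductSpace 𝕜 E]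

lemma ContinuousLinearMap.one_le_opNorm_of_apply_eq_self {T : E →L[𝕜] E} {y : E} (hy : y ≠ 0)
    (hTy : T y = y) : 1 ≤ ‖T‖ := by
  have h := T.le_opNorm y
  rw [hTy] at h
  exact (le_mul_iff_one_le_left (norm_pos_iff.mpr hy)).mp h

lemma norm_sq_add_norm_apply_sq_le_of_mem_orthogonal {K : Submodule 𝕜 E} {T : E →L[𝕜] E}
    (hrange : ∀ x, T x ∈ K) (hfix : ∀ y ∈ K, T y = y) (hT : 1 ≤ ‖T‖) {w : E} (hw : w ∈ Kᗮ) :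
    ‖w‖ ^ 2 + ‖T w‖ ^ 2 ≤ ‖T‖ ^ 2 * ‖w‖ ^ 2 := by
  set u := T w
  have hwu : inner 𝕜 w u = 0 := Submodule.inner_left_of_mem_orthogonal (hrange w) hw
  rcases eq_or_ne u 0 with hu | hu
  · rw [hu, norm_zero]
    nlinarith [one_le_pow₀ (n := 2) hT]
  set a := ‖u‖ ^ 2
  set b := ‖w‖ ^ 2
  have ha : 0 < a := by positivity
  have hb : 0 ≤ b := by positivity
  set x : E := (a : 𝕜) • w + (b : 𝕜) • u
  have hTx : T x = ((a + b : ℝ) : 𝕜) • u := by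
    rw [RCLike.ofReal_add, add_smul]
    simp only [x, map_add, map_smul, hfix u (hrange w)]
    rfl
  have hx : ‖x‖ ^ 2 = a * b * (a + b) := by
    have hperp : inner 𝕜 ((a : 𝕜) • w) ((b : 𝕜) • u) = 0 := by
      simp [inner_smul_left, inner_smul_right, hwu]
    rw [sq, norm_add_sq_eq_norm_sq_add_norm_sq_of_inner_eq_zero _ _ hperp, norm_smul, norm_smul,
      RCLike.norm_ofReal, RCLike.norm_ofReal, abs_of_nonneg ha.le, abs_of_nonneg hb]
    simp only [a, b]
    ring
  have hTx' : ‖T x‖ ^ 2 = (a + b) ^ 2 * a := by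
    rw [hTx, norm_smul, RCLike.norm_ofReal, mul_pow, sq_abs]
  have key : (a + b) * (a * (a + b)) ≤ ‖T‖ ^ 2 * b * (a * (a + b)) := by
    calc (a + b) * (a * (a + b)) = ‖T x‖ ^ 2 := by rw [hTx']; ring
      _ ≤ (‖T‖ * ‖x‖) ^ 2 := pow_le_pow_left₀ (norm_nonneg _) (T.le_opNorm x) 2
      _ = ‖T‖ ^ 2 * b * (a * (a + b)) := by rw [mul_pow, hx]; ring
  have := le_of_mul_le_mul_right key (by positivity)
  linarith

theorem norm_sub_apply_le_opNorm_mul_norm_sub_starProjection {K : Submodule 𝕜 E}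
    [K.HasOrthogonalProjection] (hK : K ≠ ⊥) {T : E →L[𝕜] E} (hrange : ∀ x, T x ∈ K)
    (hfix : ∀ y ∈ K, T y = y) (x : E) :
    ‖x - T x‖ ≤ ‖T‖ * ‖x - K.starProjection x‖ := by
  obtain ⟨y, hyK, hy⟩ := (Submodule.ne_bot_iff K).mp hK
  have hT : 1 ≤ ‖T‖ := T.one_le_opNorm_of_apply_eq_self hy (hfix y hyK)
  set w := x - K.starProjection x
  have hw : w ∈ Kᗮ := K.sub_starProjection_mem_orthogonal x
  have hxw : x - T x = w - T w := by
    simp only [w, map_sub, hfix _ (K.starProjection_apply_mem x)]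
    abel
  have hwTw : inner 𝕜 w (T w) = 0 := Submodule.inner_left_of_mem_orthogonal (hrange w) hw
  have hsq : ‖x - T x‖ ^ 2 ≤ (‖T‖ * ‖w‖) ^ 2 := by
    rw [hxw, @norm_sub_sq 𝕜, hwTw, mul_pow]
    simpa using norm_sq_add_norm_apply_sq_le_of_mem_orthogonal hrange hfix hT hw
  exact (pow_le_pow_iff_left₀ (norm_nonneg _) (by positivity) two_ne_zero).mp hsq

end ObliqueProjection

namespace Matrix

variable {𝕜 : Type*} [RCLike 𝕜] {m n : Type*} [Fintype m] [DecidableEq m] [Fintype n] [DecidableEq n]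

lemma toEuclideanLin_mul_apply_mem_range (A : Matrix m n 𝕜) (B : Matrix n m 𝕜)
    (x : EuclideanSpace 𝕜 m) : toEuclideanLin (A * B) x ∈ LinearMap.range (toEuclideanLin A) := by
  rw [toLpLin_mul_same]
  exact LinearMap.mem_range_self _ _

lemma toEuclideanLin_mul_apply_of_mul_eq_one {A : Matrix m n 𝕜} {B : Matrix n m 𝕜}
    (hBA : B * A = 1) {y : EuclideanSpace 𝕜 m} (hy : y ∈ LinearMap.range (toEuclideanLin A)) :
    toEuclideanLin (A * B) y = y := by
  obtain ⟨z, rfl⟩ := hy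
  rw [← LinearMap.comp_apply, ← toLpLin_mul_same, Matrix.mul_assoc, hBA, Matrix.mul_one]

end Matrix

theorem stmt_5_general {M n : ℕ} (hn : 0 < n)
    (V : Matrix (Fin M) (Fin n) ℂ)
    (P : Matrix (Fin M) (Fin n) ℂ)
    (hinv : IsUnit (Pᵀ * V)) :
    let In : EuclideanSpace ℂ (Fin M) →L[ℂ] EuclideanSpace ℂ (Fin M) :=
      LinearMap.toContinuousLinearMap (Matrix.toEuclideanLin (V * (Pᵀ * V)⁻¹ * Pᵀ))
    let S : Submodule ℂ (EuclideanSpace ℂ (Fin M)) :=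
      LinearMap.range (Matrix.toEuclideanLin V)
    ∀ h : EuclideanSpace ℂ (Fin M),
      ‖h - In h‖ ≤ ‖In‖ * ‖h - (S.orthogonalProjectionOnto h : EuclideanSpace ℂ (Fin M))‖ := by
  intro In S h
  have hleft : ((Pᵀ * V)⁻¹ * Pᵀ) * V = 1 := by
    rw [Matrix.mul_assoc, nonsing_inv_mul _ ((isUnit_iff_isUnit_det _).mp hinv)]
  have hV : V ≠ 0 := by
    have : Nonempty (Fin n) := ⟨⟨0, hn⟩⟩
    rintro rfl
    simp at hinv
  have hS : S ≠ ⊥ := by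
    simpa [S, LinearMap.range_eq_bot] using hV
  have hIn : In = LinearMap.toContinuousLinearMap (toEuclideanLin (V * ((Pᵀ * V)⁻¹ * Pᵀ))) := by
    simp only [In, Matrix.mul_assoc]
  rw [hIn]
  exact norm_sub_apply_le_opNorm_mul_norm_sub_starProjection hS
    (toEuclideanLin_mul_apply_mem_range V _)
    (fun _ => toEuclideanLin_mul_apply_of_mul_eq_one hleft) h

/-- DEIM error bound against the best (orthogonal-projection) approximation:
`‖h − I_n h‖₂ ≤ ‖I_n‖₂ ‖h − P_V h‖₂`. -/
theorem stmt_5 {M n : ℕ} (hn : 0 < n) (hnM : n ≤ M)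
    (V : Matrix (Fin M) (Fin n) ℂ)
    (hV : LinearIndependent ℂ (fun j : Fin n => fun i : Fin M => V i j))
    (σ : Fin n → Fin M) (hσ : Function.Injective σ)
    (P : Matrix (Fin M) (Fin n) ℂ)
    (hP : P = Matrix.of fun k j => if k = σ j then 1 else 0)
    (hinv : IsUnit (Pᵀ * V)) :
    let In : EuclideanSpace ℂ (Fin M) →L[ℂ] EuclideanSpace ℂ (Fin M) :=
      LinearMap.toContinuousLinearMap (Matrix.toEuclideanLin (V * (Pᵀ * V)⁻¹ * Pᵀ))
    let S : Submodule ℂ (EuclideanSpace ℂ (Fin M)) :=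
      LinearMap.range (Matrix.toEuclideanLin V)
    ∀ h : EuclideanSpace ℂ (Fin M),
      ‖h - In h‖ ≤ ‖In‖ * ‖h - (S.orthogonalProjectionOnto h : EuclideanSpace ℂ (Fin M))‖ :=
  stmt_5_general hn V P hinv
end

section
/- Let V ∈ ℂ^{M×n} have orthonormal columns (V† V = Iₙ) and let P ∈ ℝ^{M×n} be a selection matrix with P^T V invertible. Then the spectral norm of the DEIM operator satisfies ‖V (P^T V)^{-1} P^T‖₂ = ‖(P^T V)^{-1}‖₂. -/
open Matrix

open scoped Matrix.Norms.L2Operator in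
/-- If `U` has orthonormal columns, then left multiplication by `U` preserves
the L2 operator norm. -/
lemma aux_mul_isometry {m k l : ℕ} (U : Matrix (Fin m) (Fin k) ℂ)
    (hU : Uᴴ * U = 1) (X : Matrix (Fin k) (Fin l) ℂ) : ‖U * X‖ = ‖X‖ := by
  have h1 : ‖(U * X)ᴴ * (U * X)‖ = ‖U * X‖ * ‖U * X‖ :=
    Matrix.l2_opNorm_conjTranspose_mul_self _
  have h2 : (U * X)ᴴ * (U * X) = Xᴴ * X := by
    rw [Matrix.conjTranspose_mul, Matrix.mul_assoc, ← Matrix.mul_assoc Uᴴ U X, hU, Matrix.one_mul]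
  rw [h2, Matrix.l2_opNorm_conjTranspose_mul_self] at h1
  exact (mul_self_inj (norm_nonneg _) (norm_nonneg _)).mp h1.symm

open scoped Matrix.Norms.L2Operator in
lemma aux_mul_isometry_right {m k l : ℕ} (U : Matrix (Fin m) (Fin k) ℂ)
    (hU : Uᴴ * U = 1) (X : Matrix (Fin l) (Fin k) ℂ) : ‖X * Uᴴ‖ = ‖X‖ := by
  rw [← Matrix.l2_opNorm_conjTranspose (X * Uᴴ), Matrix.conjTranspose_mul,
    Matrix.conjTranspose_conjTranspose, aux_mul_isometry U hU, Matrix.l2_opNorm_conjTranspose]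

/-- If `V` has orthonormal columns, the spectral norm of the DEIM operator equals
`‖(PᵀV)⁻¹‖₂`. -/
theorem stmt_6 {M n : ℕ} (hn : 0 < n) (hnM : n ≤ M)
    (V : Matrix (Fin M) (Fin n) ℂ)
    (hortho : Vᴴ * V = 1)
    (σ : Fin n → Fin M) (hσ : Function.Injective σ)
    (P : Matrix (Fin M) (Fin n) ℂ)
    (hP : P = Matrix.of fun k j => if k = σ j then 1 else 0)
    (hinv : IsUnit (Pᵀ * V)) :
    ‖LinearMap.toContinuousLinearMap (Matrix.toEuclideanLin (V * (Pᵀ * V)⁻¹ * Pᵀ))‖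
      = ‖LinearMap.toContinuousLinearMap (Matrix.toEuclideanLin ((Pᵀ * V)⁻¹))‖ := by
  open scoped Matrix.Norms.L2Operator in
  show ‖V * (Pᵀ * V)⁻¹ * Pᵀ‖ = ‖(Pᵀ * V)⁻¹‖
  have hPt : Pᴴ = Pᵀ := by
    subst hP
    ext i j
    simp [Matrix.conjTranspose_apply, Matrix.transpose_apply, apply_ite (starRingEnd ℂ)]
  have hPP : Pᴴ * P = 1 := by
    subst hP
    ext i j
    simp only [Matrix.mul_apply, Matrix.conjTranspose_apply, Matrix.of_apply,
      apply_ite (starRingEnd ℂ), _root_.map_one, _root_.map_zero, ite_mul, one_mul, zero_mul,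
      Finset.sum_ite_eq', Finset.mem_univ, if_true, Matrix.one_apply]
    by_cases h : i = j
    · simp [h]
    · simp [h, hσ.ne (Ne.symm h)]
  rw [Matrix.mul_assoc, aux_mul_isometry V hortho, ← hPt,
    aux_mul_isometry_right P hPP]
end

section
/- Let V ∈ ℂ^{M×n} with linearly independent columns and let P be the selection matrix produced by the DEIM algorithm applied to the columns of V (choosing at each step the index of maximal absolute value of the residual). Then at each step i the residual rᵢ = eᵢ − U c is nonzero, hence its maximal entry rᵢ(pᵢ) ≠ 0, and consequently P^T V is invertible. -/
open Matrix

/-! The residuals are obtained from `e₁, …, eₙ` by a unitriangular change of basis, so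
`rᵢ ∈ eᵢ + span {eⱼ | j < i}`; linear independence then forces `rᵢ ≠ 0`, and hence
`rᵢ(pᵢ) ≠ 0` because `pᵢ` maximizes `|rᵢ|`. Writing `R` for the matrix of residuals and
`C` for the unitriangular matrix of coefficients, `V = R C`, so `PᵀV = (PᵀR) C`, where
`PᵀR` is lower triangular (the residuals vanish at earlier points) with the nonzero
diagonal `rᵢ(pᵢ)`. -/

section Residual

variable {ι R E : Type*} [LinearOrder ι] [Fintype ι] [Ring R] [AddCommGroup E] [Module R E]
  {e r : ι → E} {c : ι → ι → R}

theorem sub_mem_span_image_Iio_of_eq_sub_sum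
    (hres : ∀ i, r i = e i - ∑ j ∈ Finset.univ.filter (· < i), c i j • r j) (i : ι) :
    r i - e i ∈ Submodule.span R (e '' Set.Iio i) := by
  induction i using WellFoundedLT.induction with
  | _ i ih =>
  rw [hres i, sub_sub_cancel_left]
  refine neg_mem (Submodule.sum_mem _ fun j hj => Submodule.smul_mem _ _ ?_)
  have hji : j < i := (Finset.mem_filter.1 hj).2
  have hmono : Submodule.span R (e '' Set.Iio j) ≤ Submodule.span R (e '' Set.Iio i) :=
    Submodule.span_mono (Set.image_mono (Set.Iio_subset_Iio hji.le))
  simpa using add_mem (hmono (ih j hji)) (Submodule.subset_span ⟨j, hji, rfl⟩)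

theorem ne_zero_of_eq_sub_sum [Nontrivial R] (he : LinearIndependent R e)
    (hres : ∀ i, r i = e i - ∑ j ∈ Finset.univ.filter (· < i), c i j • r j) (i : ι) :
    r i ≠ 0 := by
  intro hri
  have hmem := sub_mem_span_image_Iio_of_eq_sub_sum hres i
  rw [hri, zero_sub, neg_mem_iff] at hmem
  exact he.notMem_span_image Set.self_notMem_Iio hmem

end Residual

theorem apply_ne_zero_of_forall_norm_le {α F : Type*} [NormedAddCommGroup F] {f : α → F}
    {p : α} (hmax : ∀ k, ‖f k‖ ≤ ‖f p‖) (hf : f ≠ 0) : f p ≠ 0 := by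
  intro hfp
  refine hf (funext fun k => norm_le_zero_iff.1 ?_)
  simpa [hfp] using hmax k

namespace Matrix

variable {m n R : Type*}

theorem of_eq_of_mul_one_add_strictUpper [CommRing R] [Fintype n] [LinearOrder n]
    {e r : n → m → R} {c : n → n → R}
    (hres : ∀ i, r i = e i - ∑ j ∈ Finset.univ.filter (· < i), c i j • r j) :
    (of fun k j => e j k) =
      (of fun k j => r j k) * (1 + of fun l j => if l < j then c j l else 0) := by
  ext k j
  have hj := congrFun (hres j) k
  simp only [Pi.sub_apply, Finset.sum_apply, Pi.smul_apply, smul_eq_mul] at hj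
  rw [Matrix.mul_add, Matrix.mul_one, add_apply]
  simp only [mul_apply, of_apply, mul_ite, mul_zero, ← Finset.sum_filter]
  rw [eq_sub_iff_add_eq] at hj
  rw [← hj, Finset.sum_congr rfl fun l _ => mul_comm _ _]

theorem isUnit_one_add_strictUpper [CommRing R] [Fintype n] [LinearOrder n] (c : n → n → R) :
    IsUnit (1 + of fun l j => if l < j then c j l else 0) := by
  rw [isUnit_iff_isUnit_det, det_of_isUpperTriangular]
  · simp
  · intro i j (hji : j < i)
    simp [one_apply_ne hji.ne', not_lt_of_gt hji]

theorem transpose_selection_mul [NonAssocSemiring R] [Fintype m] [DecidableEq m] (σ : n → m) (A : Matrix m n R) :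
    (of fun k j => if k = σ j then (1 : R) else 0)ᵀ * A = A.submatrix σ id := by
  ext i j
  simp [mul_apply]

end Matrix

theorem stmt_16_general {M n : ℕ}
    (e r : Fin n → Fin M → ℂ)
    (he : LinearIndependent ℂ e)
    (σ : Fin n → Fin M)
    (c : Fin n → Fin n → ℂ)
    -- the residual at step `i` is `eᵢ` minus a combination of the previous
    -- residuals (equivalently, of `e₁,…,e_{i−1}`) ...
    (hres : ∀ i : Fin n, r i = e i - ∑ j ∈ Finset.univ.filter (· < i), c i j • r j)
    -- ... chosen so that the residual interpolates at the previously selected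
    -- indices, i.e. vanishes there:
    (hvanish : ∀ i j : Fin n, j < i → r i (σ j) = 0)
    -- the index `σ i` maximizes the absolute value of the residual:
    (hmax : ∀ i : Fin n, ∀ k : Fin M, ‖r i k‖ ≤ ‖r i (σ i)‖) :
    let V : Matrix (Fin M) (Fin n) ℂ := Matrix.of fun k j => e j k
    let P : Matrix (Fin M) (Fin n) ℂ := Matrix.of fun k j => if k = σ j then 1 else 0
    (∀ i : Fin n, r i ≠ 0)
      ∧ (∀ i : Fin n, r i (σ i) ≠ 0)
      ∧ IsUnit (Pᵀ * V) := by
  intro V P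
  have hr : ∀ i, r i ≠ 0 := ne_zero_of_eq_sub_sum he hres
  have hrσ : ∀ i, r i (σ i) ≠ 0 := fun i => apply_ne_zero_of_forall_norm_le (hmax i) (hr i)
  refine ⟨hr, hrσ, ?_⟩
  have hPR : IsUnit ((of fun k j => r j k).submatrix σ id) := by
    rw [isUnit_iff_isUnit_det, det_of_isLowerTriangular]
    · exact (Finset.prod_ne_zero_iff.2 fun i _ => hrσ i).isUnit
    · exact fun i j (hij : i < j) => hvanish j i hij
  rw [show V = _ from of_eq_of_mul_one_add_strictUpper hres, ← Matrix.mul_assoc,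
    transpose_selection_mul]
  exact hPR.mul (isUnit_one_add_strictUpper c)

/-- In the DEIM greedy point selection applied to linearly independent columns,
each residual is nonzero, its maximal entry `rᵢ(pᵢ)` is nonzero, and consequently
`PᵀV` is invertible. -/
theorem stmt_16 {M n : ℕ} (hn : 0 < n) (hnM : n ≤ M)
    (e r : Fin n → Fin M → ℂ)
    (he : LinearIndependent ℂ e)
    (σ : Fin n → Fin M)
    (c : Fin n → Fin n → ℂ)
    -- the residual at step `i` is `eᵢ` minus a combination of the previous
    -- residuals (equivalently, of `e₁,…,e_{i−1}`) ...
    (hres : ∀ i : Fin n, r i = e i - ∑ j ∈ Finset.univ.filter (· < i), c i j • r j)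
    -- ... chosen so that the residual interpolates at the previously selected
    -- indices, i.e. vanishes there:
    (hvanish : ∀ i j : Fin n, j < i → r i (σ j) = 0)
    -- the index `σ i` maximizes the absolute value of the residual:
    (hmax : ∀ i : Fin n, ∀ k : Fin M, ‖r i k‖ ≤ ‖r i (σ i)‖) :
    let V : Matrix (Fin M) (Fin n) ℂ := Matrix.of fun k j => e j k
    let P : Matrix (Fin M) (Fin n) ℂ := Matrix.of fun k j => if k = σ j then 1 else 0
    (∀ i : Fin n, r i ≠ 0)
      ∧ (∀ i : Fin n, r i (σ i) ≠ 0)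
      ∧ IsUnit (Pᵀ * V) :=
  stmt_16_general e r he σ c hres hvanish hmax
end
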